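/- arXiv:2408.07088 — 2 statements merged into one kernel-verified Lean document; each statement's English description precedes it below -/
import Mathlib

section
/- In the general-operator setting with single-source initialization, message passing only touches nodes reachable from the head of the target link: for every k ≥ 0 and every node z that is not reachable from v in T, h^k_z = 0. -/
/-!
Call an edge `(x, y, z)` *dead* if `z` is not reachable from `v`; then `x` is not reachable
either. By induction on `k`, the features of unreachable nodes and of dead edges stay `0`:
initially the only nonzero edge feature sits on `(u, rt, v)`, whose head is `v`; and at a step,
every message into an unreachable node comes along a dead edge, so it is `(0 ⊗ r) ⊕ (0 ⊗ r) = 0`,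
while a dead edge's feature is updated to `h_x ⊕ 0 = 0 ⊕ 0 = 0`.
-/

def ReachableFrom {V R : Type*} (T : Finset (V × R × V)) (v z : V) : Prop :=
  z = v ∨ ∃ (l : List (V × R × V)) (hne : l ≠ []),
    (∀ t ∈ l, t ∈ T) ∧ l.Chain' (fun a b => a.2.2 = b.1) ∧
    (l.head hne).1 = v ∧ (l.getLast hne).2.2 = z

theorem ReachableFrom.step {V R : Type*} {T : Finset (V × R × V)} {v : V} {t : V × R × V}
    (ht : t ∈ T) (hx : ReachableFrom T v t.1) : ReachableFrom T v t.2.2 := by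
  right
  rcases hx with hx | ⟨l, hne, hmem, hchain, hhead, hlast⟩
  · exact ⟨[t], by simp, by simpa using ht, List.isChain_singleton _, by simp [hx], by simp⟩
  · refine ⟨l ++ [t], by simp, ?_, ?_, by rwa [List.head_append_of_ne_nil hne], by simp⟩
    · intro s hs
      rcases List.mem_append.1 hs with hs | hs
      · exact hmem s hs
      · exact List.mem_singleton.1 hs ▸ ht
    · refine hchain.append (List.isChain_singleton _) fun a ha b hb => ?_
      simp only [List.getLast?_eq_some_getLast hne, Option.mem_def, Option.some.injEq,
        List.head?_cons] at ha hb
      rw [← ha, ← hb]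
      exact hlast

theorem Finset.fold_eq_init_of_forall_eq {α β : Type*} {op : β → β → β} [Std.Commutative op]
    [Std.Associative op] {b : β} (hb : op b b = b) {s : Finset α} {f : α → β}
    (hf : ∀ x ∈ s, f x = b) : s.fold op b f = b := by
  classical
  rw [Finset.fold_congr hf, Finset.fold_const b (by rw [hb, hb]), hb, ite_self]

theorem node_feature_zero_off_reachable_set_general_ops_general
    {V R : Type*} [DecidableEq V] [DecidableEq R]
    (T : Finset (V × R × V)) (d : ℕ) (r : R → Fin d → ℝ)
    (op otimes : (Fin d → ℝ) → (Fin d → ℝ) → (Fin d → ℝ))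
    (hcomm : Std.Commutative op) (hassoc : Std.Associative op)
    (hid : ∀ a : Fin d → ℝ, op 0 a = a)
    (hzero : ∀ a : Fin d → ℝ, otimes 0 a = 0)
    (u v : V) (rt : R)
    (h : ℕ → V → Fin d → ℝ) (e : ℕ → V × R × V → Fin d → ℝ)
    (hh0 : ∀ z : V, h 0 z = 0)
    (he0 : ∀ t : V × R × V, e 0 t = if t = (u, rt, v) then r rt else 0)
    (hh : ∀ k : ℕ, 1 ≤ k → ∀ z : V,
      h k z = @Finset.fold _ _ op hcomm hassoc 0
        (fun t => op (otimes (h (k - 1) t.1) (r t.2.1)) (otimes (e (k - 1) t) (r t.2.1)))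
        (T.filter (fun t => t.2.2 = z)))
    (he : ∀ k : ℕ, 1 ≤ k → ∀ t ∈ T, e k t = op (h k t.1) (e (k - 1) t)) :
    ∀ (k : ℕ) (z : V), ¬ ReachableFrom T v z → h k z = 0 := by
  have tail_dead {t} (ht : t ∈ T) (hdead : ¬ ReachableFrom T v t.2.2) :
      ¬ ReachableFrom T v t.1 := fun hx => hdead (hx.step ht)
  have invariant : ∀ k, (∀ z, ¬ ReachableFrom T v z → h k z = 0) ∧
      (∀ t ∈ T, ¬ ReachableFrom T v t.2.2 → e k t = 0) := by
    intro k
    induction k with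
    | zero =>
      refine ⟨fun z _ => hh0 z, fun t _ hdead => ?_⟩
      rw [he0, if_neg]
      rintro rfl
      exact hdead (Or.inl rfl)
    | succ k ih =>
      have node_zero : ∀ z, ¬ ReachableFrom T v z → h (k + 1) z = 0 := by
        intro z hz
        rw [hh (k + 1) k.succ_pos z, Nat.add_sub_cancel]
        refine Finset.fold_eq_init_of_forall_eq (hid 0) fun t ht => ?_
        obtain ⟨htT, rfl⟩ := Finset.mem_filter.1 ht
        rw [ih.1 t.1 (tail_dead htT hz), ih.2 t htT hz, hzero, hid]
      refine ⟨node_zero, fun t ht hdead => ?_⟩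
      rw [he (k + 1) k.succ_pos t ht, node_zero t.1 (tail_dead ht hdead), Nat.add_sub_cancel,
        ih.2 t ht hdead, hid]
  exact fun k => (invariant k).1

/-- In the general-operator setting with single-source initialization, message passing
only touches nodes reachable from the head `v` of the target link: for every `k ≥ 0` and
every node `z` not reachable from `v` in `T`, `h^k_z = 0`. -/
theorem node_feature_zero_off_reachable_set_general_ops
    {V R : Type*} [Fintype V] [Fintype R] [DecidableEq V] [DecidableEq R]
    (T : Finset (V × R × V)) (d : ℕ) (hd : 1 ≤ d) (r : R → Fin d → ℝ)
    (op otimes : (Fin d → ℝ) → (Fin d → ℝ) → (Fin d → ℝ))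
    (hcomm : Std.Commutative op) (hassoc : Std.Associative op)
    (hid : ∀ a : Fin d → ℝ, op 0 a = a)
    (hzero : ∀ a : Fin d → ℝ, otimes 0 a = 0)
    (u v : V) (rt : R) (hT : (u, rt, v) ∈ T) (huv : u ≠ v)
    (h : ℕ → V → Fin d → ℝ) (e : ℕ → V × R × V → Fin d → ℝ)
    (hh0 : ∀ z : V, h 0 z = 0)
    (he0 : ∀ t : V × R × V, e 0 t = if t = (u, rt, v) then r rt else 0)
    (hh : ∀ k : ℕ, 1 ≤ k → ∀ z : V,
      h k z = @Finset.fold _ _ op hcomm hassoc 0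
        (fun t => op (otimes (h (k - 1) t.1) (r t.2.1)) (otimes (e (k - 1) t) (r t.2.1)))
        (T.filter (fun t => t.2.2 = z)))
    (he : ∀ k : ℕ, 1 ≤ k → ∀ t ∈ T, e k t = op (h k t.1) (e (k - 1) t)) :
    ∀ (k : ℕ) (z : V), ¬ ReachableFrom T v z → h k z = 0 :=
  node_feature_zero_off_reachable_set_general_ops_general T d r op otimes hcomm hassoc hid hzero u v
    rt h e hh0 he0 hh he
end

section
/- In the general-operator setting with single-source initialization, every non-target edge whose source is not reachable from the head of the target link keeps a zero feature forever: for every k ≥ 0 and every triple (x,y,z) ∈ T with (x,y,z) ≠ (u,r_t,v) such that x is not reachable from v in T, e^k_{x,y,z} = 0. -/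
/-!
Call an edge *dormant* if it is not the target edge and its tail is not reachable from `v`,
and a node dormant if it is not reachable from `v`. By induction on `k`, nodes and edges that
are dormant carry the zero feature: every edge entering a dormant node is itself dormant
(reachability propagates along edges, and the target edge enters `v`), so the node update
aggregates only terms `(0 ⊗ r) ⊕ (0 ⊗ r) = 0`; and a dormant edge adds the zero feature of its
dormant tail to its own zero feature.
-/

theorem Finset.fold_eq_init_of_forall {α β : Type*} {op : β → β → β} [Std.Commutative op]
    [Std.Associative op] {b : β} {f : α → β} {s : Finset α} (hb : op b b = b)
    (hf : ∀ x ∈ s, f x = b) : s.fold op b f = b := by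
  classical
  rw [Finset.fold_congr hf, Finset.fold_const b (by rw [hb, hb])]
  split_ifs
  · rfl
  · exact hb

namespace ReachableFrom

variable {V R : Type*} {T : Finset (V × R × V)} {v : V}

theorem refl : ReachableFrom T v v := Or.inl rfl

theorem step_s14 {t : V × R × V} (ht : t ∈ T) (hr : ReachableFrom T v t.1) :
    ReachableFrom T v t.2.2 := by
  rcases hr with htail | ⟨l, hne, hmem, hchain, hhead, hlast⟩
  · exact Or.inr ⟨[t], List.cons_ne_nil _ _, by simpa using ht, List.isChain_singleton _,
      htail, rfl⟩
  · refine Or.inr ⟨l ++ [t], List.concat_ne_nil _ _, ?_, ?_, by rwa [List.head_append_of_ne_nil],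
      by simp⟩
    · intro s hs
      rcases List.mem_append.mp hs with hs | hs
      exacts [hmem s hs, List.mem_singleton.mp hs ▸ ht]
    · refine hchain.append (List.isChain_singleton _) fun x hx y hy => ?_
      simp only [List.getLast?_eq_some_getLast hne, Option.mem_def, Option.some.injEq,
        List.head?_cons] at hx hy
      rw [← hx, ← hy, hlast]

end ReachableFrom

theorem edge_feature_zero_off_reachable_set_general_ops_general
    {V R : Type*} [DecidableEq V] [DecidableEq R]
    (T : Finset (V × R × V)) (d : ℕ) (r : R → Fin d → ℝ)
    (op otimes : (Fin d → ℝ) → (Fin d → ℝ) → (Fin d → ℝ))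
    (hcomm : Std.Commutative op) (hassoc : Std.Associative op)
    (hid : ∀ a : Fin d → ℝ, op 0 a = a)
    (hzero : ∀ a : Fin d → ℝ, otimes 0 a = 0)
    (u v : V) (rt : R)
    (h : ℕ → V → Fin d → ℝ) (e : ℕ → V × R × V → Fin d → ℝ)
    (hh0 : ∀ z : V, h 0 z = 0)
    (he0 : ∀ t : V × R × V, e 0 t = if t = (u, rt, v) then r rt else 0)
    (hh : ∀ k : ℕ, 1 ≤ k → ∀ z : V,
      h k z = @Finset.fold _ _ op hcomm hassoc 0
        (fun t => op (otimes (h (k - 1) t.1) (r t.2.1)) (otimes (e (k - 1) t) (r t.2.1)))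
        (T.filter (fun t => t.2.2 = z)))
    (he : ∀ k : ℕ, 1 ≤ k → ∀ t ∈ T, e k t = op (h k t.1) (e (k - 1) t)) :
    ∀ (k : ℕ), ∀ t ∈ T, t ≠ (u, rt, v) → ¬ ReachableFrom T v t.1 → e k t = 0 := by
  suffices dormant : ∀ k, (∀ z, ¬ ReachableFrom T v z → h k z = 0) ∧
      ∀ t ∈ T, t ≠ (u, rt, v) → ¬ ReachableFrom T v t.1 → e k t = 0 from
    fun k => (dormant k).2
  intro k
  induction k with
  | zero => exact ⟨fun z _ => hh0 z, fun t _ hne _ => by rw [he0, if_neg hne]⟩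
  | succ n ih =>
    obtain ⟨ih_node, ih_edge⟩ := ih
    have node : ∀ z, ¬ ReachableFrom T v z → h (n + 1) z = 0 := by
      intro z hz
      rw [hh (n + 1) n.succ_pos z]
      refine Finset.fold_eq_init_of_forall (hid 0) fun t ht => ?_
      obtain ⟨htT, rfl⟩ := Finset.mem_filter.mp ht
      have htail : ¬ ReachableFrom T v t.1 := fun hr => hz (hr.step_s14 htT)
      have hne : t ≠ (u, rt, v) := by rintro rfl; exact hz ReachableFrom.refl
      simp only [Nat.add_sub_cancel, ih_node t.1 htail, ih_edge t htT hne htail, hzero, hid]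
    refine ⟨node, fun t htT hne htail => ?_⟩
    rw [he (n + 1) n.succ_pos t htT, node t.1 htail, hid, Nat.add_sub_cancel,
      ih_edge t htT hne htail]

/-- In the general-operator setting with single-source initialization, every non-target
edge whose source is not reachable from the head `v` of the target link keeps a zero
feature forever: for every `k ≥ 0` and every `(x,y,z) ∈ T` with `(x,y,z) ≠ (u,r_t,v)`
such that `x` is not reachable from `v` in `T`, `e^k_{x,y,z} = 0`. -/
theorem edge_feature_zero_off_reachable_set_general_ops
    {V R : Type*} [Fintype V] [Fintype R] [DecidableEq V] [DecidableEq R]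
    (T : Finset (V × R × V)) (d : ℕ) (hd : 1 ≤ d) (r : R → Fin d → ℝ)
    (op otimes : (Fin d → ℝ) → (Fin d → ℝ) → (Fin d → ℝ))
    (hcomm : Std.Commutative op) (hassoc : Std.Associative op)
    (hid : ∀ a : Fin d → ℝ, op 0 a = a)
    (hzero : ∀ a : Fin d → ℝ, otimes 0 a = 0)
    (u v : V) (rt : R) (hT : (u, rt, v) ∈ T) (huv : u ≠ v)
    (h : ℕ → V → Fin d → ℝ) (e : ℕ → V × R × V → Fin d → ℝ)
    (hh0 : ∀ z : V, h 0 z = 0)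
    (he0 : ∀ t : V × R × V, e 0 t = if t = (u, rt, v) then r rt else 0)
    (hh : ∀ k : ℕ, 1 ≤ k → ∀ z : V,
      h k z = @Finset.fold _ _ op hcomm hassoc 0
        (fun t => op (otimes (h (k - 1) t.1) (r t.2.1)) (otimes (e (k - 1) t) (r t.2.1)))
        (T.filter (fun t => t.2.2 = z)))
    (he : ∀ k : ℕ, 1 ≤ k → ∀ t ∈ T, e k t = op (h k t.1) (e (k - 1) t)) :
    ∀ (k : ℕ), ∀ t ∈ T, t ≠ (u, rt, v) → ¬ ReachableFrom T v t.1 → e k t = 0 :=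
  edge_feature_zero_off_reachable_set_general_ops_general T d r op otimes hcomm hassoc hid hzero u v
    rt h e hh0 he0 hh he
end
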